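/- With Q₁ = ℂ[c₁,c₂,d₂]/J₁ as in the previous statement, the quotient ring Q₁/(c₁) is a 1-dimensional ℂ-vector space; equivalently, the zero locus of c₁ in Spec Q₁ has length 1. -/

import Mathlib

open MvPolynomial

noncomputable section

abbrev qc1 : MvPolynomial (Fin 3) ℂ := X 0
abbrev qc2 : MvPolynomial (Fin 3) ℂ := X 1
abbrev qd2 : MvPolynomial (Fin 3) ℂ := X 2

/-- The ideal of the `q = 1` specializations of the quantum relations. -/
def quantumIdeal : Ideal (MvPolynomial (Fin 3) ℂ) :=
  Ideal.span {qc1 ^ 4 - 11 * qc1 + 3 * qc2 ^ 2 - 9 * qc2 * qd2 - 3 * qd2 ^ 2,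
    qc1 ^ 2 * qc2 - 3 * qc1 - qc2 * qd2 - 3 * qd2 ^ 2,
    qc1 ^ 2 * qd2 - 2 * qc1 - 3 * qd2 ^ 2,
    9 * (qc1 * qc2 ^ 2 - 4 * qc1 ^ 2 + 3 * qc2 + qd2)
      - 14 * (qc1 * qc2 * qd2 - 3 * qc1 ^ 2 + qc2 + 3 * qd2),
    2 * (qc1 * qc2 * qd2 - 3 * qc1 ^ 2 + qc2 + 3 * qd2)
      - 3 * (qc1 * qd2 ^ 2 - 2 * qc1 ^ 2 + 3 * qd2)}

/-- `Q₁ = ℂ[c₁,c₂,d₂]/J₁`: the `q = 1` specialization of the small quantum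
cohomology ring of `Y`. -/
abbrev QuantumRing : Type := MvPolynomial (Fin 3) ℂ ⧸ quantumIdeal

/-!
Modulo `c₁` the last two generators of `J₁` reduce to the linear forms `13 c₂ - 33 d₂` and
`2 c₂ - 3 d₂`, whose determinant `27` is a unit, so `J₁ + (c₁)` contains all three variables; being
contained in the ideal of the origin, it is that maximal ideal, and the quotient is `ℂ`.
-/

namespace MvPolynomial

variable {σ : Type*}

theorem ker_constantCoeff_eq_idealOfVars {R : Type*} [CommSemiring R] :
    RingHom.ker (constantCoeff : MvPolynomial σ R →+* R) = idealOfVars σ R := by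
  ext p
  rw [← pow_one (idealOfVars σ R), mem_pow_idealOfVars_iff', RingHom.mem_ker]
  simp [Finsupp.degree_eq_zero_iff, constantCoeff]

theorem finrank_quotient_idealOfVars {K : Type*} [Field K] :
    Module.finrank K (MvPolynomial σ K ⧸ idealOfVars σ K) = 1 := by
  have hker : RingHom.ker (aeval (0 : σ → K)) = idealOfVars σ K := by
    rw [← ker_constantCoeff_eq_idealOfVars]
    ext p
    simp [RingHom.mem_ker]
  rw [← hker, (Ideal.quotientKerAlgEquivOfSurjective (f := aeval (0 : σ → K))
    fun z => ⟨C z, by simp⟩).toLinearEquiv.finrank_eq, Module.finrank_self]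

end MvPolynomial

def Ideal.quotQuotSpanSingletonEquivₐ (R : Type*) {A : Type*} [CommRing R] [CommRing A]
    [Algebra R A] (I : Ideal A) (a : A) :
    ((A ⧸ I) ⧸ (Ideal.span {Ideal.Quotient.mk I a} : Ideal (A ⧸ I))) ≃ₐ[R]
      A ⧸ I ⊔ Ideal.span {a} :=
  (Ideal.quotientEquivAlgOfEq R (by
    rw [Ideal.map_span, Set.image_singleton, Ideal.Quotient.mkₐ_eq_mk])).trans
    (DoubleQuot.quotQuotEquivQuotSupₐ R I (Ideal.span {a}))

theorem quantumIdeal_sup_span_qc1 :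
    quantumIdeal ⊔ Ideal.span {qc1} = idealOfVars (Fin 3) ℂ := by
  set J := quantumIdeal ⊔ Ideal.span {qc1}
  refine le_antisymm ?_ ?_
  · rw [← ker_constantCoeff_eq_idealOfVars]
    refine sup_le (Ideal.span_le.2 ?_) (Ideal.span_le.2 ?_) <;>
      simp [Set.insert_subset_iff, RingHom.mem_ker]
  have reduce : ∀ g ∈ quantumIdeal, ∀ h, g - qc1 * h ∈ J := fun g hg h =>
    J.sub_mem (Ideal.mem_sup_left hg)
      (Ideal.mem_sup_right (Ideal.mul_mem_right h _ (Ideal.mem_span_singleton_self qc1)))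
  have hu : 13 * qc2 - 33 * qd2 ∈ J := by
    convert reduce (9 * (qc1 * qc2 ^ 2 - 4 * qc1 ^ 2 + 3 * qc2 + qd2)
      - 14 * (qc1 * qc2 * qd2 - 3 * qc1 ^ 2 + qc2 + 3 * qd2)) (Ideal.subset_span (by simp))
      (9 * qc2 ^ 2 + 6 * qc1 - 14 * qc2 * qd2) using 1
    ring
  have hv : 2 * qc2 - 3 * qd2 ∈ J := by
    convert reduce (2 * (qc1 * qc2 * qd2 - 3 * qc1 ^ 2 + qc2 + 3 * qd2)
      - 3 * (qc1 * qd2 ^ 2 - 2 * qc1 ^ 2 + 3 * qd2)) (Ideal.subset_span (by simp))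
      (2 * qc2 * qd2 - 3 * qd2 ^ 2) using 1
    ring
  have hc2 : 27 * qc2 ∈ J := by
    convert J.add_mem (J.mul_mem_left (-3) hu) (J.mul_mem_left 33 hv) using 1
    ring
  have hd2 : 27 * qd2 ∈ J := by
    convert J.add_mem (J.mul_mem_left (-2) hu) (J.mul_mem_left 13 hv) using 1
    ring
  have h27 : IsUnit (27 : MvPolynomial (Fin 3) ℂ) := by
    rw [← map_ofNat C 27]
    simp
  refine Ideal.span_le.2 (Set.range_subset_iff.2 fun i => ?_)
  fin_cases i
  · exact Ideal.mem_sup_right (Ideal.mem_span_singleton_self qc1)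
  · exact (J.unit_mul_mem_iff_mem h27).1 hc2
  · exact (J.unit_mul_mem_iff_mem h27).1 hd2

/-- The zero locus of `c₁` in `Spec Q₁` has length 1: `Q₁/(c₁)` is 1-dimensional. -/
theorem quantumRing_c1_quotient_dim_one :
    Module.finrank ℂ
      (QuantumRing ⧸ Ideal.span {Ideal.Quotient.mk quantumIdeal qc1}) = 1 := by
  rw [(Ideal.quotQuotSpanSingletonEquivₐ ℂ quantumIdeal qc1).toLinearEquiv.finrank_eq,
    quantumIdeal_sup_span_qc1, finrank_quotient_idealOfVars]

end
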